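/- Any density matrix ρ with Tr(Mρ) = k (for a fixed effect operator 0 ≤ M ≤ I and constant k ∈ [0,1]) can be written as a convex combination of pure states |ψ_i⟩⟨ψ_i| each satisfying ⟨ψ_i|M|ψ_i⟩ = k, provided the set {τ density matrix : Tr(Mτ) = k} contains ρ; i.e., the extreme points of this convex set that appear in some decomposition of ρ can be taken to be pure states satisfying the same linear constraint. -/

import Mathlib

open scoped Matrix ComplexOrder

/-- Square root of a Hermitian matrix via the spectral theorem (junk value `0` otherwise). -/
noncomputable def msqrt {n : ℕ} (A : Matrix (Fin n) (Fin n) ℂ) : Matrix (Fin n) (Fin n) ℂ :=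
  if h : A.IsHermitian then
    (h.eigenvectorUnitary : Matrix (Fin n) (Fin n) ℂ) *
      Matrix.diagonal (fun i => (Real.sqrt (h.eigenvalues i) : ℂ)) *
      (h.eigenvectorUnitary : Matrix (Fin n) (Fin n) ℂ)ᴴ
  else 0

/-- Quantum fidelity `F(ρ,σ) = Tr √(√ρ σ √ρ)`. -/
noncomputable def fidelity {n : ℕ} (ρ σ : Matrix (Fin n) (Fin n) ℂ) : ℝ :=
  (msqrt (msqrt ρ * σ * msqrt ρ)).trace.re

/-- Von Neumann entropy `S(ρ) = -Tr(ρ log ρ)` via eigenvalues (junk value `0` if not Hermitian);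
note `Real.log 0 = 0` so `0 log 0 = 0`. -/
noncomputable def vnEntropy {n : ℕ} (ρ : Matrix (Fin n) (Fin n) ℂ) : ℝ :=
  if h : ρ.IsHermitian then -∑ i, (h.eigenvalues i) * Real.log (h.eigenvalues i) else 0

/-- Outer product `|ψ⟩⟨ψ|`. -/
noncomputable def proj {n : ℕ} (ψ : Fin n → ℂ) : Matrix (Fin n) (Fin n) ℂ :=
  Matrix.of fun i j => ψ i * star (ψ j)

/-- Inner product `⟨ψ|φ⟩`. -/
noncomputable def qInner {n : ℕ} (ψ φ : Fin n → ℂ) : ℂ := ∑ i, star (ψ i) * φ i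

/-!
Diagonalise `ρ = |x⟩⟨x| + |y⟩⟨y|` with `x ⊥ y`. For `|u| = 1` the parallelogram identity gives
`|x⟩⟨x| + |y⟩⟨y| = ½ |x + u y⟩⟨x + u y| + ½ |x - u y⟩⟨x - u y|`, and for Hermitian `A`
`⟨x ± u y|A|x ± u y⟩ = ⟨x|A|x⟩ + ⟨y|A|y⟩ ± 2 Re (u ⟨x|A|y⟩)`. Choosing the phase `u` so that
`u ⟨x|M|y⟩` is purely imaginary kills the cross term for `A = M`, and orthogonality kills it for
`A = 1`; so both pure states are normalised and have `M`-expectation `Tr (M ρ) = k`.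
-/

open Matrix

lemma Complex.exists_norm_eq_one_re_mul_eq_zero (c : ℂ) : ∃ u : ℂ, ‖u‖ = 1 ∧ (u * c).re = 0 := by
  refine ⟨I * exp (-(c.arg : ℂ) * I), ?_, ?_⟩
  · rw [norm_mul, norm_I, ← ofReal_neg, norm_exp_ofReal_mul_I, one_mul]
  · have hrot : exp (-(c.arg : ℂ) * I) * c = ‖c‖ := by
      conv_lhs => arg 2; rw [← norm_mul_exp_arg_mul_I c]
      rw [mul_left_comm, ← exp_add, neg_mul, neg_add_cancel, exp_zero, mul_one]
    rw [mul_assoc, hrot]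
    simp

section

variable {n : ℕ}

lemma proj_eq_vecMulVec (ψ : Fin n → ℂ) : proj ψ = vecMulVec ψ (star ψ) := rfl

lemma trace_proj (ψ : Fin n → ℂ) : (proj ψ).trace = qInner ψ ψ :=
  (trace_vecMulVec ψ (star ψ)).trans (dotProduct_comm _ _)

lemma trace_mul_proj (A : Matrix (Fin n) (Fin n) ℂ) (ψ : Fin n → ℂ) :
    (A * proj ψ).trace = star ψ ⬝ᵥ (A *ᵥ ψ) := by
  rw [proj_eq_vecMulVec, mul_vecMulVec, trace_vecMulVec, dotProduct_comm]

lemma proj_smul (c : ℂ) (ψ : Fin n → ℂ) : proj (c • ψ) = ((‖c‖ ^ 2 : ℝ) : ℂ) • proj ψ := by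
  ext i j
  simp only [proj, of_apply, Matrix.smul_apply, Pi.smul_apply, smul_eq_mul, star_mul',
    Complex.star_def]
  rw [Complex.ofReal_pow, ← Complex.mul_conj']
  ring

lemma proj_add_add_proj_sub (x y : Fin n → ℂ) :
    proj (x + y) + proj (x - y) = (2 : ℂ) • (proj x + proj y) := by
  ext i j
  simp only [proj, of_apply, Matrix.add_apply, Matrix.smul_apply, Pi.add_apply, Pi.sub_apply,
    star_add, star_sub, smul_eq_mul]
  ring

lemma Matrix.IsHermitian.star_dotProduct_mulVec_add_smul {A : Matrix (Fin n) (Fin n) ℂ}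
    (hA : A.IsHermitian) (x y : Fin n → ℂ) {u : ℂ} (hu : ‖u‖ = 1) :
    star (x + u • y) ⬝ᵥ (A *ᵥ (x + u • y)) = star x ⬝ᵥ (A *ᵥ x) + star y ⬝ᵥ (A *ᵥ y)
      + 2 * ((u * (star x ⬝ᵥ (A *ᵥ y))).re : ℂ) := by
  have hcross : star y ⬝ᵥ (A *ᵥ x) = star (star x ⬝ᵥ (A *ᵥ y)) := by
    rw [star_dotProduct, star_mulVec, hA.eq, dotProduct_comm, dotProduct_mulVec, dotProduct_comm]
  have hunit : starRingEnd ℂ u * u = 1 := by rw [Complex.conj_mul', hu]; simp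
  simp only [star_add, star_smul, mulVec_add, mulVec_smul, add_dotProduct, dotProduct_add,
    smul_dotProduct, dotProduct_smul, smul_eq_mul, hcross, Complex.star_def]
  rw [Complex.re_eq_add_conj, map_mul]
  linear_combination (star y ⬝ᵥ (A *ᵥ y)) * hunit

lemma Matrix.IsHermitian.eq_sum_smul_proj {A : Matrix (Fin n) (Fin n) ℂ} (hA : A.IsHermitian) :
    A = ∑ i, (hA.eigenvalues i : ℂ) • proj ⇑(hA.eigenvectorBasis i) := by
  conv_lhs => rw [hA.spectral_theorem]
  ext i j
  simp [mul_apply, proj, Matrix.sum_apply, diagonal_apply, mul_comm]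
  exact Finset.sum_congr rfl fun _ _ => mul_assoc _ _ _

lemma Matrix.PosSemidef.exists_orthogonal_eq_sum_proj {ρ : Matrix (Fin n) (Fin n) ℂ}
    (hρ : ρ.PosSemidef) :
    ∃ v : Fin n → Fin n → ℂ, Pairwise (fun i j => star (v i) ⬝ᵥ v j = 0) ∧ ρ = ∑ i, proj (v i) := by
  set e := hρ.isHermitian.eigenvectorBasis
  refine ⟨fun i => (√(hρ.isHermitian.eigenvalues i) : ℂ) • ⇑(e i), fun i j hij => ?_, ?_⟩
  · have horth : star ⇑(e i) ⬝ᵥ ⇑(e j) = 0 := by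
      rw [dotProduct_comm, ← EuclideanSpace.inner_eq_star_dotProduct]
      exact e.orthonormal.2 hij
    simp [star_smul, dotProduct_smul, smul_dotProduct, horth]
  · conv_lhs => rw [hρ.isHermitian.eq_sum_smul_proj]
    refine Finset.sum_congr rfl fun i _ => ?_
    rw [proj_smul, Complex.norm_real, Real.norm_of_nonneg (Real.sqrt_nonneg _),
      Real.sq_sqrt (hρ.eigenvalues_nonneg i)]

lemma trace_mul_proj_add_smul {A : Matrix (Fin n) (Fin n) ℂ} (hA : A.IsHermitian)
    (x y : Fin n → ℂ) {u : ℂ} (hu : ‖u‖ = 1) (hre : (u * (star x ⬝ᵥ (A *ᵥ y))).re = 0) :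
    (A * proj (x + u • y)).trace = (A * (proj x + proj y)).trace := by
  rw [trace_mul_proj, hA.star_dotProduct_mulVec_add_smul x y hu, hre, mul_add, trace_add,
    trace_mul_proj, trace_mul_proj]
  simp

theorem exists_constrained_pure_decomposition_of_rank_two {M : Matrix (Fin n) (Fin n) ℂ}
    (hM : M.IsHermitian) {x y : Fin n → ℂ} (hxy : star x ⬝ᵥ y = 0) :
    ∃ ψ : Fin 2 → Fin n → ℂ, proj x + proj y = ∑ i, (1 / 2 : ℂ) • proj (ψ i) ∧
      ∀ i, (proj (ψ i)).trace = (proj x + proj y).trace ∧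
        (M * proj (ψ i)).trace = (M * (proj x + proj y)).trace := by
  obtain ⟨u, hu, hre⟩ := Complex.exists_norm_eq_one_re_mul_eq_zero (star x ⬝ᵥ (M *ᵥ y))
  have hpure : ∀ w : ℂ, ‖w‖ = 1 → (w * (star x ⬝ᵥ (M *ᵥ y))).re = 0 →
      (proj (x + w • y)).trace = (proj x + proj y).trace ∧
        (M * proj (x + w • y)).trace = (M * (proj x + proj y)).trace := fun w hw hwre =>
    ⟨by simpa using trace_mul_proj_add_smul isHermitian_one x y hw (by simp [hxy]),
      trace_mul_proj_add_smul hM x y hw hwre⟩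
  refine ⟨![x + u • y, x + (-u) • y], ?_, fun i => ?_⟩
  · rw [Fin.sum_univ_two, ← smul_add]
    simp only [cons_val_zero, cons_val_one, neg_smul, ← sub_eq_add_neg, proj_add_add_proj_sub,
      proj_smul, hu, smul_smul]
    norm_num
  · fin_cases i
    · exact hpure u hu hre
    · exact hpure (-u) (by rwa [norm_neg]) (by simp [hre])

end

theorem constrained_pure_decomposition_general (M ρ : Matrix (Fin 2) (Fin 2) ℂ)
    (hM : M.PosSemidef)
    (hρ : ρ.PosSemidef) (htρ : ρ.trace = 1)
    (k : ℂ) (hk : (M * ρ).trace = k) :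
    ∃ (N : ℕ) (lam : Fin N → ℝ) (ψ : Fin N → Fin 2 → ℂ),
      (∀ i, 0 ≤ lam i) ∧ (∑ i, lam i = 1) ∧ (∀ i, qInner (ψ i) (ψ i) = 1) ∧
      ρ = ∑ i, (lam i : ℂ) • proj (ψ i) ∧
      ∀ i, (M * proj (ψ i)).trace = k := by
  obtain ⟨v, hv, hρv⟩ := hρ.exists_orthogonal_eq_sum_proj
  rw [Fin.sum_univ_two] at hρv
  obtain ⟨ψ, hdecomp, htr⟩ :=
    exists_constrained_pure_decomposition_of_rank_two hM.isHermitian (hv zero_ne_one)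
  subst hρv
  refine ⟨2, fun _ => 1 / 2, ψ, fun _ => by norm_num, by norm_num, fun i => ?_, ?_, fun i => ?_⟩
  · rw [← trace_proj, (htr i).1, htρ]
  · simp [hdecomp]
  · rw [← hk, (htr i).2]

/-- Constrained pure-state decomposition (qubit case): for a fixed effect operator
`0 ≤ M ≤ I` on `ℂ²`, every density matrix `ρ` with `Tr(Mρ) = k` admits a finite convex
decomposition `ρ = ∑ᵢ λᵢ |ψᵢ⟩⟨ψᵢ|` into pure states each satisfying
`⟨ψᵢ|M|ψᵢ⟩ = Tr(M|ψᵢ⟩⟨ψᵢ|) = k`. -/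
theorem constrained_pure_decomposition (M ρ : Matrix (Fin 2) (Fin 2) ℂ)
    (hM : M.PosSemidef) (hM' : (1 - M).PosSemidef)
    (hρ : ρ.PosSemidef) (htρ : ρ.trace = 1)
    (k : ℂ) (hk : (M * ρ).trace = k) :
    ∃ (N : ℕ) (lam : Fin N → ℝ) (ψ : Fin N → Fin 2 → ℂ),
      (∀ i, 0 ≤ lam i) ∧ (∑ i, lam i = 1) ∧ (∀ i, qInner (ψ i) (ψ i) = 1) ∧
      ρ = ∑ i, (lam i : ℂ) • proj (ψ i) ∧
      ∀ i, (M * proj (ψ i)).trace = k :=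
  constrained_pure_decomposition_general M ρ hM hρ htρ k hk
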